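/- arXiv:1110.5780 — 2 statements merged into one kernel-verified Lean document; each statement's English description precedes it below -/
import Mathlib

section
/- For every β ∈ [0,d] and every finite complex Borel measure μ on S^d, the set E(β,μ) = {y ∈ S^d : limsup_{r→1} |P[μ](ry)|·(1-r)^β = +∞} has Hausdorff dimension at most d - β. -/
/-!
Put `s = d - β` and `ν = |μ|`. If `ν (B(y, t)) ≤ C t ^ s` for all `t > 0`, then the Poisson
kernel bound `P(r y, ξ) ≲ (1 - r) / ((1 - r) + |y - ξ|) ^ (d + 1)`, summed over the dyadic
annuli `2 ^ (k - 1) (1 - r) ≤ |y - ξ| < 2 ^ k (1 - r)`, gives `|P[μ](r y)| ≲ C (1 - r) ^ (-β)`.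
So at every exceptional point `ν` has infinite upper `s`-density, and a Vitali covering argument
shows that the set of such points is `μH[s]`-null.
-/

open Metric Set MeasureTheory Filter
open scoped Topology

/-- The Poisson kernel on the unit ball of `ℝ^{d+1}`. -/
noncomputable def spherePoissonKernel (d : ℕ) (x ξ : EuclideanSpace ℝ (Fin (d + 1))) : ℝ :=
  (1 - ‖x‖ ^ 2) / ‖x - ξ‖ ^ (d + 1)

lemma div_half_pow_mul_rpow_le {n : ℕ} {s C δ x : ℝ} (hsn : s ≤ n) (hC : 0 ≤ C) (hδ : 0 < δ)
    (hx : δ ≤ x) :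
    δ / (x / 2) ^ (n + 1) * (C * x ^ s) ≤ 2 ^ (n + 1) * C * δ ^ (s - n) * (δ / x) := by
  have hx0 : 0 < x := hδ.trans_le hx
  have hsplit : x ^ s = x ^ (s - n) * x ^ n := by
    rw [← Real.rpow_natCast, ← Real.rpow_add hx0, sub_add_cancel]
  have hmono : x ^ (s - n) ≤ δ ^ (s - n) := Real.rpow_le_rpow_of_nonpos hδ hx (by linarith)
  calc δ / (x / 2) ^ (n + 1) * (C * x ^ s) = 2 ^ (n + 1) * C * x ^ (s - n) * (δ / x) := by
        rw [hsplit, div_pow, pow_succ]; field_simp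
    _ ≤ 2 ^ (n + 1) * C * δ ^ (s - n) * (δ / x) := by gcongr

lemma le_two_mul_add_dist_of_mem_disjointed {X : Type*} [PseudoMetricSpace X] {y ξ : X} {δ : ℝ}
    {k : ℕ} (hδ : 0 ≤ δ) (hξ : ξ ∈ disjointed (fun k : ℕ => ball y (2 ^ k * δ)) k) :
    2 ^ k * δ ≤ 2 * (δ + dist ξ y) := by
  cases k with
  | zero => linarith [dist_nonneg (x := ξ) (y := y)]
  | succ k =>
    rw [disjointed_eq_inter_compl] at hξ
    have : 2 ^ k * δ ≤ dist ξ y := by simpa using mem_iInter₂.1 hξ.2 k (Nat.lt_succ_self k)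
    rw [pow_succ]; linarith [dist_nonneg (x := ξ) (y := y)]

lemma setLIntegral_disjointed_ball_div_add_dist_pow_le {X : Type*} [PseudoMetricSpace X]
    [MeasurableSpace X] [OpensMeasurableSpace X] {ν : Measure X} {y : X} {n : ℕ} {s C δ : ℝ}
    (hsn : s ≤ n) (hC : 0 ≤ C) (hδ : 0 < δ)
    (hν : ∀ t > 0, ν (closedBall y t) ≤ ENNReal.ofReal (C * t ^ s)) (k : ℕ) :
    ∫⁻ ξ in disjointed (fun k : ℕ => ball y (2 ^ k * δ)) k,
        ENNReal.ofReal (δ / (δ + dist ξ y) ^ (n + 1)) ∂ν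
      ≤ ENNReal.ofReal (2 ^ (n + 1) * C * δ ^ (s - n)) * 2⁻¹ ^ k := by
  set S := disjointed (fun k : ℕ => ball y (2 ^ k * δ)) k
  have hx : δ ≤ 2 ^ k * δ := le_mul_of_one_le_left hδ.le (one_le_pow₀ one_le_two)
  have hle : ∀ ξ ∈ S, ENNReal.ofReal (δ / (δ + dist ξ y) ^ (n + 1))
      ≤ ENNReal.ofReal (δ / (2 ^ k * δ / 2) ^ (n + 1)) := fun ξ hξ => by
    have := le_two_mul_add_dist_of_mem_disjointed hδ.le hξ
    gcongr
    linarith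
  have hmeas : ν S ≤ ENNReal.ofReal (C * (2 ^ k * δ) ^ s) :=
    (measure_mono ((disjointed_subset _ k).trans ball_subset_closedBall)).trans
      (hν _ (by positivity))
  calc ∫⁻ ξ in S, ENNReal.ofReal (δ / (δ + dist ξ y) ^ (n + 1)) ∂ν
      ≤ ENNReal.ofReal (δ / (2 ^ k * δ / 2) ^ (n + 1)) * ν S :=
        (setLIntegral_mono' (MeasurableSet.disjointed (fun _ => measurableSet_ball) k)
          hle).trans_eq (setLIntegral_const _ _)
    _ ≤ ENNReal.ofReal (δ / (2 ^ k * δ / 2) ^ (n + 1) * (C * (2 ^ k * δ) ^ s)) := by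
        rw [ENNReal.ofReal_mul (by positivity)]; gcongr
    _ ≤ ENNReal.ofReal (2 ^ (n + 1) * C * δ ^ (s - n) * (δ / (2 ^ k * δ))) :=
        ENNReal.ofReal_le_ofReal (div_half_pow_mul_rpow_le hsn hC hδ hx)
    _ = ENNReal.ofReal (2 ^ (n + 1) * C * δ ^ (s - n)) * 2⁻¹ ^ k := by
        rw [ENNReal.ofReal_mul (by positivity), div_mul_cancel_right₀ hδ.ne', ← inv_pow,
          ENNReal.ofReal_pow (by norm_num), ENNReal.ofReal_inv_of_pos two_pos,
          ENNReal.ofReal_ofNat]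

theorem lintegral_div_add_dist_pow_le {X : Type*} [PseudoMetricSpace X] [MeasurableSpace X]
    [OpensMeasurableSpace X] {ν : Measure X} {y : X} {n : ℕ} {s C δ : ℝ}
    (hsn : s ≤ n) (hC : 0 ≤ C) (hδ : 0 < δ)
    (hν : ∀ t > 0, ν (closedBall y t) ≤ ENNReal.ofReal (C * t ^ s)) :
    ∫⁻ ξ, ENNReal.ofReal (δ / (δ + dist ξ y) ^ (n + 1)) ∂ν
      ≤ ENNReal.ofReal (2 ^ (n + 2) * C * δ ^ (s - n)) := by
  set B : ℕ → Set X := fun k => ball y (2 ^ k * δ)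
  have hcover : ⋃ k, disjointed B k = univ := by
    rw [iUnion_disjointed]
    refine eq_univ_of_forall fun ξ => mem_iUnion.2 ?_
    obtain ⟨k, hk⟩ := pow_unbounded_of_one_lt (dist ξ y / δ) one_lt_two
    exact ⟨k, mem_ball.2 ((div_lt_iff₀ hδ).1 hk)⟩
  calc ∫⁻ ξ, ENNReal.ofReal (δ / (δ + dist ξ y) ^ (n + 1)) ∂ν
      ≤ ∑' k, ∫⁻ ξ in disjointed B k, ENNReal.ofReal (δ / (δ + dist ξ y) ^ (n + 1)) ∂ν := by
        rw [← setLIntegral_univ, ← hcover]; exact lintegral_iUnion_le _ _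
    _ ≤ ∑' k : ℕ, ENNReal.ofReal (2 ^ (n + 1) * C * δ ^ (s - n)) * 2⁻¹ ^ k :=
        ENNReal.tsum_le_tsum (setLIntegral_disjointed_ball_div_add_dist_pow_le hsn hC hδ hν)
    _ = ENNReal.ofReal (2 ^ (n + 2) * C * δ ^ (s - n)) := by
        rw [ENNReal.tsum_mul_left, ENNReal.tsum_geometric, ENNReal.one_sub_inv_two, inv_inv,
          ← ENNReal.ofReal_ofNat 2, ← ENNReal.ofReal_mul (by positivity)]
        congr 1; ring

theorem Set.PairwiseDisjoint.countable_of_measure_pos {α ι : Type*} [MeasurableSpace α]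
    {ν : Measure α} [SFinite ν] {u : Set ι} {f : ι → Set α} (hf : ∀ i, MeasurableSet (f i))
    (hu : u.PairwiseDisjoint f) (hpos : ∀ i ∈ u, 0 < ν (f i)) : u.Countable := by
  have := Measure.countable_meas_pos_of_disjoint_iUnion (μ := ν) (As := fun i : u => f i)
    (fun i => hf i) fun i j hij => hu i.2 j.2 (Subtype.coe_injective.ne hij)
  rw [show {i : u | 0 < ν (f i)} = univ from eq_univ_of_forall fun i => hpos i.1 i.2,
    countable_univ_iff] at this
  exact countable_coe_iff.1 this

lemma ediam_closedBall_le {X : Type*} [PseudoMetricSpace X] (x : X) {ρ : ℝ} (hρ : 0 ≤ ρ) :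
    ediam (closedBall x ρ) ≤ ENNReal.ofReal (2 * ρ) := by
  rw [ENNReal.ofReal_mul zero_le_two, ENNReal.ofReal_ofNat, ← closedEBall_ofReal hρ]
  exact ediam_closedEBall_le

theorem exists_countable_cover_tsum_ediam_rpow_le {X : Type*} [PseudoMetricSpace X]
    [MeasurableSpace X] [OpensMeasurableSpace X] (ν : Measure X) [SFinite ν]
    {s R : ℝ} (hs : 0 ≤ s) (hR : 0 < R) {A : Set X}
    (hA : ∀ y ∈ A, ∃ t ∈ Ioc 0 R, ENNReal.ofReal (R⁻¹ * t ^ s) < ν (closedBall y t)) :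
    ∃ u : Set (X × ℝ), u.Countable ∧
      (∀ p ∈ u, ediam (closedBall p.1 (5 * p.2)) ≤ ENNReal.ofReal (10 * R)) ∧
      A ⊆ ⋃ p : u, closedBall p.1.1 (5 * p.1.2) ∧
      ∑' p : u, ediam (closedBall p.1.1 (5 * p.1.2)) ^ s
        ≤ ENNReal.ofReal (10 ^ s * R) * ν univ := by
  set T := {p : X × ℝ | p.1 ∈ A ∧ p.2 ∈ Ioc 0 R ∧
    ENNReal.ofReal (R⁻¹ * p.2 ^ s) < ν (closedBall p.1 p.2)}
  obtain ⟨u, huT, hdisj, hcov⟩ := Vitali.exists_disjoint_subfamily_covering_enlargement_closedBall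
    T Prod.fst Prod.snd R (fun p hp => hp.2.1.2) 5 (by norm_num)
  have hu : u.Countable := hdisj.countable_of_measure_pos (ν := ν)
    (fun _ => measurableSet_closedBall) fun p hp => pos_of_gt (huT hp).2.2
  have hdiam : ∀ p ∈ u, ediam (closedBall p.1 (5 * p.2)) ≤ ENNReal.ofReal (10 * R) := by
    intro p hp
    obtain ⟨-, ⟨hp0, hpR⟩, -⟩ := huT hp
    exact (ediam_closedBall_le _ (by positivity)).trans (ENNReal.ofReal_le_ofReal (by linarith))
  have hsize : ∀ p ∈ u, ediam (closedBall p.1 (5 * p.2)) ^ s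
      ≤ ENNReal.ofReal (10 ^ s * R) * ν (closedBall p.1 p.2) := by
    intro p hp
    obtain ⟨-, ⟨hp0, -⟩, hpν⟩ := huT hp
    calc ediam (closedBall p.1 (5 * p.2)) ^ s ≤ ENNReal.ofReal (2 * (5 * p.2)) ^ s :=
          ENNReal.rpow_le_rpow (ediam_closedBall_le _ (by positivity)) hs
      _ = ENNReal.ofReal (10 ^ s * R) * ENNReal.ofReal (R⁻¹ * p.2 ^ s) := by
          rw [ENNReal.ofReal_rpow_of_nonneg (by positivity) hs,
            ← ENNReal.ofReal_mul (by positivity), show 2 * (5 * p.2) = 10 * p.2 by ring,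
            Real.mul_rpow (by norm_num) hp0.le]
          field_simp
      _ ≤ ENNReal.ofReal (10 ^ s * R) * ν (closedBall p.1 p.2) := by gcongr
  refine ⟨u, hu, hdiam, fun y hy => ?_, ?_⟩
  · obtain ⟨t, ht, htν⟩ := hA y hy
    obtain ⟨p, hp, hsub⟩ := hcov (y, t) ⟨hy, ht, htν⟩
    exact mem_iUnion.2 ⟨⟨p, hp⟩, hsub (mem_closedBall_self ht.1.le)⟩
  · have := hu.to_subtype
    calc ∑' p : u, ediam (closedBall p.1.1 (5 * p.1.2)) ^ s
        ≤ ∑' p : u, ENNReal.ofReal (10 ^ s * R) * ν (closedBall p.1.1 p.1.2) :=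
          ENNReal.tsum_le_tsum fun p => hsize p p.2
      _ = ENNReal.ofReal (10 ^ s * R) * ν (⋃ p ∈ u, closedBall p.1 p.2) := by
          rw [ENNReal.tsum_mul_left, measure_biUnion hu hdisj fun _ _ => measurableSet_closedBall]
      _ ≤ ENNReal.ofReal (10 ^ s * R) * ν univ := by gcongr; exact subset_univ _

theorem hausdorffMeasure_eq_zero_of_frequently_lt_measure_closedBall {X : Type*} [MetricSpace X]
    [MeasurableSpace X] [BorelSpace X] (ν : Measure X) [IsFiniteMeasure ν] {s : ℝ} (hs : 0 ≤ s)
    {A : Set X}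
    (hA : ∀ y ∈ A, ∀ C : ℝ, ∃ᶠ t in 𝓝[>] (0 : ℝ), ENNReal.ofReal (C * t ^ s) < ν (closedBall y t)) :
    μH[s] A = 0 := by
  have hheavy : ∀ R > 0, ∀ y ∈ A, ∃ t ∈ Ioc 0 R,
      ENNReal.ofReal (R⁻¹ * t ^ s) < ν (closedBall y t) := fun R hR y hy =>
    ((hA y hy R⁻¹).and_eventually (Ioc_mem_nhdsGT hR)).exists.imp fun _ ht => ⟨ht.2, ht.1⟩
  choose u hu hdiam hsub hsum using fun n : ℕ =>
    exists_countable_cover_tsum_ediam_rpow_le ν hs Nat.inv_pos_of_nat (hheavy _ Nat.inv_pos_of_nat)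
  have := fun n => (hu n).to_subtype
  have hR : Tendsto (fun n : ℕ => ((n : ℝ) + 1)⁻¹) atTop (𝓝 0) := by
    simpa using tendsto_one_div_add_atTop_nhds_zero_nat (𝕜 := ℝ)
  refine nonpos_iff_eq_zero.1 ?_
  calc μH[s] A ≤ liminf (fun n => ∑' p : u n, ediam (closedBall p.1.1 (5 * p.1.2)) ^ s) atTop :=
        Measure.hausdorffMeasure_le_liminf_tsum s A _
          (by simpa using ENNReal.tendsto_ofReal (hR.const_mul 10)) _
          (Eventually.of_forall fun n p => hdiam n p p.2) (Eventually.of_forall hsub)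
    _ ≤ liminf (fun n : ℕ => ENNReal.ofReal (10 ^ s * ((n : ℝ) + 1)⁻¹) * ν univ) atTop :=
        liminf_le_liminf (Eventually.of_forall hsum)
    _ = 0 := by
        refine Tendsto.liminf_eq ?_
        simpa using ENNReal.Tendsto.mul_const (ENNReal.tendsto_ofReal (hR.const_mul (10 ^ s)))
          (Or.inr (measure_ne_top ν univ))

lemma exists_forall_measure_closedBall_le_of_eventually {X : Type*} [PseudoMetricSpace X]
    [MeasurableSpace X] (ν : Measure X) [IsFiniteMeasure ν]
    {y : X} {s C : ℝ} (hs : 0 ≤ s)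
    (h : ∀ᶠ t in 𝓝[>] (0 : ℝ), ν (closedBall y t) ≤ ENNReal.ofReal (C * t ^ s)) :
    ∃ C' ≥ 0, ∀ t > 0, ν (closedBall y t) ≤ ENNReal.ofReal (C' * t ^ s) := by
  obtain ⟨ε, hε, hεh⟩ := mem_nhdsGT_iff_exists_Ioc_subset.1 h
  set m := (ν univ).toReal
  have hεs : 0 < ε ^ s := Real.rpow_pos_of_pos hε s
  refine ⟨max C 0 + m / ε ^ s, by positivity, fun t ht => ?_⟩
  have hts : 0 ≤ m / ε ^ s * t ^ s := by positivity
  rcases le_or_gt t ε with htε | hεt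
  · refine (hεh ⟨ht, htε⟩).trans (ENNReal.ofReal_le_ofReal ?_)
    nlinarith [le_max_left C 0, Real.rpow_pos_of_pos ht s]
  · have hm : m ≤ m / ε ^ s * t ^ s := by
      rw [div_mul_eq_mul_div, le_div_iff₀ hεs]
      exact mul_le_mul_of_nonneg_left (Real.rpow_le_rpow hε.le hεt.le hs) ENNReal.toReal_nonneg
    calc ν (closedBall y t) ≤ ν univ := measure_mono (subset_univ _)
      _ = ENNReal.ofReal m := (ENNReal.ofReal_toReal (measure_ne_top ν univ)).symm
      _ ≤ ENNReal.ofReal ((max C 0 + m / ε ^ s) * t ^ s) := by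
          refine ENNReal.ofReal_le_ofReal ?_
          nlinarith [le_max_right C 0, Real.rpow_pos_of_pos ht s]

lemma norm_smul_of_norm_eq_one {E : Type*} [SeminormedAddCommGroup E] [NormedSpace ℝ E] {y : E}
    (hy : ‖y‖ = 1) {r : ℝ} (hr : 0 ≤ r) : ‖r • y‖ = r := by
  rw [norm_smul, hy, mul_one, Real.norm_of_nonneg hr]

section Poisson

variable {d : ℕ}

lemma spherePoissonKernel_nonneg {x : EuclideanSpace ℝ (Fin (d + 1))} (hx : ‖x‖ ≤ 1)
    (ξ : EuclideanSpace ℝ (Fin (d + 1))) : 0 ≤ spherePoissonKernel d x ξ := by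
  unfold spherePoissonKernel
  have : ‖x‖ ^ 2 ≤ 1 := pow_le_one₀ (norm_nonneg x) hx
  exact div_nonneg (by linarith) (by positivity)

lemma spherePoissonKernel_smul_le {y ξ : EuclideanSpace ℝ (Fin (d + 1))} (hy : ‖y‖ = 1)
    (hξ : ‖ξ‖ = 1) {r : ℝ} (hr0 : 0 ≤ r) (hr1 : r < 1) :
    spherePoissonKernel d (r • y) ξ
      ≤ 2 * 3 ^ (d + 1) * ((1 - r) / ((1 - r) + dist ξ y) ^ (d + 1)) := by
  have hry : ‖r • y‖ = r := norm_smul_of_norm_eq_one hy hr0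
  have hfar : 1 - r ≤ ‖r • y - ξ‖ := by
    simpa [hξ, hry] using norm_sub_norm_le ξ (r • y) |>.trans_eq (norm_sub_rev _ _)
  have hdist : dist ξ y ≤ (1 - r) + ‖r • y - ξ‖ := by
    have hy' : dist (r • y) y = 1 - r := by
      rw [dist_eq_norm, show r • y - y = (r - 1) • y by rw [sub_smul, one_smul], norm_smul, hy,
        mul_one, Real.norm_eq_abs, abs_sub_comm, abs_of_pos (by linarith)]
    calc dist ξ y ≤ dist ξ (r • y) + dist (r • y) y := dist_triangle _ _ _
      _ = (1 - r) + ‖r • y - ξ‖ := by rw [hy', dist_comm, dist_eq_norm, add_comm]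
  have hδ : 0 < 1 - r := by linarith
  have hpos : 0 < ‖r • y - ξ‖ := hδ.trans_le hfar
  calc spherePoissonKernel d (r • y) ξ = (1 - r ^ 2) / ‖r • y - ξ‖ ^ (d + 1) := by
        rw [spherePoissonKernel, hry]
    _ ≤ 2 * (1 - r) / ‖r • y - ξ‖ ^ (d + 1) := by gcongr; nlinarith
    _ = 2 * 3 ^ (d + 1) * ((1 - r) / (3 * ‖r • y - ξ‖) ^ (d + 1)) := by
        rw [mul_pow]; field_simp
    _ ≤ 2 * 3 ^ (d + 1) * ((1 - r) / ((1 - r) + dist ξ y) ^ (d + 1)) := by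
        have : 0 < (1 - r) + dist ξ y := add_pos_of_pos_of_nonneg hδ dist_nonneg
        gcongr
        linarith

lemma norm_spherePoissonKernel_smul_mul_le {y ξ : sphere (0 : EuclideanSpace ℝ (Fin (d + 1))) 1}
    {z : ℂ} (hz : ‖z‖ ≤ 1) {r : ℝ} (hr0 : 0 ≤ r) (hr1 : r < 1) :
    ‖(spherePoissonKernel d (r • (y : EuclideanSpace ℝ (Fin (d + 1)))) ξ : ℂ) * z‖
      ≤ 2 * 3 ^ (d + 1) * ((1 - r) / ((1 - r) + dist ξ y) ^ (d + 1)) := by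
  have hy := mem_sphere_zero_iff_norm.1 y.2
  have hP := spherePoissonKernel_nonneg ((norm_smul_of_norm_eq_one hy hr0).trans_le hr1.le) ξ
  rw [norm_mul, Complex.norm_real, Real.norm_of_nonneg hP, Subtype.dist_eq]
  exact (mul_le_of_le_one_right hP hz).trans
    (spherePoissonKernel_smul_le hy (mem_sphere_zero_iff_norm.1 ξ.2) hr0 hr1)

theorem norm_integral_spherePoissonKernel_mul_rpow_le {β C : ℝ} (hβ : 0 ≤ β) (hC : 0 ≤ C)
    (ν : Measure (sphere (0 : EuclideanSpace ℝ (Fin (d + 1))) 1))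
    {g : sphere (0 : EuclideanSpace ℝ (Fin (d + 1))) 1 → ℂ} (hg : ∀ ξ, ‖g ξ‖ ≤ 1)
    {y : sphere (0 : EuclideanSpace ℝ (Fin (d + 1))) 1}
    (hν : ∀ t > 0, ν (closedBall y t) ≤ ENNReal.ofReal (C * t ^ ((d : ℝ) - β)))
    {r : ℝ} (hr0 : 0 ≤ r) (hr1 : r < 1) :
    ‖∫ ξ, (spherePoissonKernel d (r • (y : EuclideanSpace ℝ (Fin (d + 1)))) ξ : ℂ) * g ξ ∂ν‖
      * (1 - r) ^ β ≤ 2 * 3 ^ (d + 1) * 2 ^ (d + 2) * C := by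
  set δ := 1 - r
  have hδ : 0 < δ := sub_pos.2 hr1
  have hnorm : ‖∫ ξ, (spherePoissonKernel d (r • (y : EuclideanSpace ℝ (Fin (d + 1)))) ξ : ℂ)
      * g ξ ∂ν‖ ≤ 2 * 3 ^ (d + 1) * (2 ^ (d + 2) * C * δ ^ (-β)) := by
    refine (norm_integral_le_lintegral_norm _).trans
      (ENNReal.toReal_le_of_le_ofReal (by positivity) ?_)
    calc _ ≤ ∫⁻ ξ, ENNReal.ofReal (2 * 3 ^ (d + 1)) *
          ENNReal.ofReal (δ / (δ + dist ξ y) ^ (d + 1)) ∂ν :=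
          lintegral_mono fun ξ => by
            rw [← ENNReal.ofReal_mul (by positivity)]
            exact ENNReal.ofReal_le_ofReal (norm_spherePoissonKernel_smul_mul_le (hg ξ) hr0 hr1)
      _ = ENNReal.ofReal (2 * 3 ^ (d + 1)) *
          ∫⁻ ξ, ENNReal.ofReal (δ / (δ + dist ξ y) ^ (d + 1)) ∂ν :=
          lintegral_const_mul' _ _ ENNReal.ofReal_ne_top
      _ ≤ ENNReal.ofReal (2 * 3 ^ (d + 1)) * ENNReal.ofReal (2 ^ (d + 2) * C * δ ^ (-β)) := by
          gcongr
          rw [← sub_sub_cancel_left (d : ℝ) β]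
          exact lintegral_div_add_dist_pow_le (sub_le_self _ hβ) hC hδ hν
      _ = _ := (ENNReal.ofReal_mul (by positivity)).symm
  calc _ ≤ 2 * 3 ^ (d + 1) * (2 ^ (d + 2) * C * δ ^ (-β)) * δ ^ β := by gcongr
    _ = 2 * 3 ^ (d + 1) * 2 ^ (d + 2) * C := by
        rw [mul_assoc, mul_assoc, mul_assoc, ← Real.rpow_add hδ, neg_add_cancel, Real.rpow_zero]
        ring

end Poisson

theorem dimH_exceptional_le_general (d : ℕ) (β : ℝ) (hβ : β ∈ Icc (0 : ℝ) d)
    (ν : Measure (sphere (0 : EuclideanSpace ℝ (Fin (d + 1))) 1)) [IsFiniteMeasure ν]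
    (g : sphere (0 : EuclideanSpace ℝ (Fin (d + 1))) 1 → ℂ)
    (hg : ∀ ξ, ‖g ξ‖ = 1) :
    dimH {y : sphere (0 : EuclideanSpace ℝ (Fin (d + 1))) 1 |
        ∀ M : ℝ, ∃ᶠ r in nhdsWithin (1 : ℝ) (Iio 1),
          M < ‖∫ ξ, (spherePoissonKernel d (r • (y : EuclideanSpace ℝ (Fin (d + 1)))) ξ : ℂ) * g ξ ∂ν‖
                * Real.rpow (1 - r) β}
      ≤ ENNReal.ofReal (d - β) := by
  obtain ⟨hβ0, hβd⟩ := hβ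
  have hs : 0 ≤ (d : ℝ) - β := sub_nonneg.2 hβd
  refine dimH_le_of_hausdorffMeasure_ne_top ?_
  rw [Real.coe_toNNReal _ hs, hausdorffMeasure_eq_zero_of_frequently_lt_measure_closedBall ν hs]
  · exact ENNReal.zero_ne_top
  intro y hy C
  by_contra hC
  simp only [not_frequently, not_lt] at hC
  obtain ⟨C', hC'0, hC'⟩ := exists_forall_measure_closedBall_le_of_eventually ν hs hC
  obtain ⟨r, hlt, hr⟩ := ((hy (2 * 3 ^ (d + 1) * 2 ^ (d + 2) * C')).and_eventually
    (Ioo_mem_nhdsLT zero_lt_one)).exists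
  exact (norm_integral_spherePoissonKernel_mul_rpow_le hβ0 hC'0 ν (fun ξ => (hg ξ).le) hC'
    hr.1.le hr.2).not_gt hlt

/-- A finite complex Borel measure `μ` on the sphere is encoded through its polar
decomposition `dμ = g d|μ|`, with `ν = |μ|` a finite positive measure and `‖g‖ ≡ 1`.
For `β ∈ [0,d]`, the set where `limsup_{r→1} |P[μ](ry)| (1-r)^β = ∞` has Hausdorff
dimension at most `d - β`. -/
theorem dimH_exceptional_le (d : ℕ) (β : ℝ) (hβ : β ∈ Icc (0 : ℝ) d)
    (ν : Measure (sphere (0 : EuclideanSpace ℝ (Fin (d + 1))) 1)) [IsFiniteMeasure ν]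
    (g : sphere (0 : EuclideanSpace ℝ (Fin (d + 1))) 1 → ℂ)
    (hgm : Measurable g) (hg : ∀ ξ, ‖g ξ‖ = 1) :
    dimH {y : sphere (0 : EuclideanSpace ℝ (Fin (d + 1))) 1 |
        ∀ M : ℝ, ∃ᶠ r in nhdsWithin (1 : ℝ) (Iio 1),
          M < ‖∫ ξ, (spherePoissonKernel d (r • (y : EuclideanSpace ℝ (Fin (d + 1)))) ξ : ℂ) * g ξ ∂ν‖
                * Real.rpow (1 - r) β}
      ≤ ENNReal.ofReal (d - β) :=
  dimH_exceptional_le_general d β hβ ν g hg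
end

section
/- Let E ⊂ S^d, let φ be a dimension function, and let τ : (0,1) → (0,∞) be nonincreasing with τ(x) → ∞ as x → 0⁺. Suppose H^φ(E) = 0 and τ(s) = O(s^{-d} φ(s)). Then there exists a nonnegative f ∈ L¹(S^d) such that for every y ∈ E, limsup_{r→1} P[f](ry)/τ(1-r) = +∞. -/
/-!
For each `n`, cover `E` by closed balls `B n i` of radii `r n i ≤ 1 / (n + 1)` with
`∑ i, φ (r n i) ≤ η n / (n + 1)`, where `∑ n, η n < 1`, and spread the mass `(n + 1) φ (r n i)`
uniformly over `B n i`; the resulting `f` has `‖f‖₁ < 1`. If `y ∈ B n i` and `s = r n i`, then the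
Poisson kernel at `(1 - s) y` is at least `s / (3 s) ^ (d + 1)` on `B n i` (whose points lie within
`3 s` of `(1 - s) y`), so `P[f]((1 - s) y) ≥ (n + 1) φ(s) / (3 ^ (d + 1) s ^ d)`, which dominates
`(n + 1) τ(s)` up to a constant by the `O`-hypothesis. Letting `n → ∞` (so `s → 0`) gives the blow-up.
-/

open Metric Set MeasureTheory Filter

/-- The Poisson kernel on the unit ball of `ℝ^{d+1}`. -/
noncomputable def ballPoissonKernel (d : ℕ) (x ξ : EuclideanSpace ℝ (Fin (d + 1))) : ℝ :=
  (1 - ‖x‖ ^ 2) / ‖x - ξ‖ ^ (d + 1)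

/-- The normalized surface measure on the unit sphere of `ℝ^{d+1}`. -/
noncomputable def sphereMeasure (d : ℕ) :
    Measure (sphere (0 : EuclideanSpace ℝ (Fin (d + 1))) 1) :=
  ((volume : Measure (EuclideanSpace ℝ (Fin (d + 1)))).toSphere Set.univ)⁻¹ •
    (volume : Measure (EuclideanSpace ℝ (Fin (d + 1)))).toSphere

open scoped ENNReal Topology

theorem exists_cover_of_mkMetric_eq_zero {X : Type*} [EMetricSpace X] [MeasurableSpace X]
    [BorelSpace X] {m : ℝ≥0∞ → ℝ≥0∞} {E : Set X} (hE : Measure.mkMetric m E = 0)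
    {r η : ℝ≥0∞} (hr : 0 < r) (hη : η ≠ 0) :
    ∃ t : ℕ → Set X, E ⊆ ⋃ n, t n ∧ (∀ n, ediam (t n) ≤ r) ∧
      ∑' n, ⨆ _ : (t n).Nonempty, m (ediam (t n)) < η := by
  rw [Measure.mkMetric_apply, ENNReal.iSup_eq_zero] at hE
  have h := (ENNReal.iSup_eq_zero.mp (hE r) hr).trans_lt (pos_iff_ne_zero.mpr hη)
  simpa only [iInf_lt_iff, exists_prop] using h

theorem exists_closedBall_cover_of_mkMetric_eq_zero {X : Type*} [MetricSpace X]
    [MeasurableSpace X] [BorelSpace X] [Nonempty X] {φ : ℝ → ℝ} (hφ0 : φ 0 = 0)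
    (hφmono : Monotone φ) (hφcont : ContinuousAt φ 0) {E : Set X}
    (hE : Measure.mkMetric (fun t => ENNReal.ofReal (φ t.toReal)) E = 0)
    {ε : ℝ} (hε : 0 < ε) {η : ℝ≥0∞} (hη : η ≠ 0) :
    ∃ (c : ℕ → X) (ρ : ℕ → ℝ), (∀ n, ρ n ∈ Ioc 0 ε) ∧ E ⊆ ⋃ n, closedBall (c n) (ρ n) ∧
      ∑' n, ENNReal.ofReal (φ (ρ n)) ≤ η := by
  classical
  obtain ⟨t, hEt, htε, hsum⟩ :=
    exists_cover_of_mkMetric_eq_zero hE (ENNReal.ofReal_pos.mpr hε) (ENNReal.half_pos hη).ne'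
  obtain ⟨w, hw0, hwsum⟩ := ENNReal.exists_pos_sum_of_countable (ENNReal.half_pos hη).ne' ℕ
  -- enlarging radius `n` to at least `δ n` keeps the balls of positive measure at cost `w n`
  have hδ : ∀ n, ∃ δ ∈ Ioc 0 ε, φ δ < w n := by
    intro n
    have hφw : ∀ᶠ s in 𝓝[>] (0 : ℝ), φ s < w n :=
      (hφcont.tendsto.mono_left nhdsWithin_le_nhds).eventually_lt_const
        (by simpa [hφ0] using hw0 n)
    exact (hφw.and (Ioc_mem_nhdsGT hε)).exists.imp fun δ h => ⟨h.2, h.1⟩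
  choose δ hδε hφδ using hδ
  have hdiam : ∀ n, Metric.diam (t n) ≤ ε := fun n =>
    ENNReal.toReal_le_of_le_ofReal hε.le (htε n)
  let c : ℕ → X := fun n => if h : (t n).Nonempty then h.some else Classical.arbitrary X
  refine ⟨c, fun n => max (Metric.diam (t n)) (δ n),
    fun n => ⟨lt_max_of_lt_right (hδε n).1, max_le (hdiam n) (hδε n).2⟩, ?_, ?_⟩
  · intro y hy
    obtain ⟨n, hyn⟩ := mem_iUnion.mp (hEt hy)
    have hne : (t n).Nonempty := ⟨y, hyn⟩
    refine mem_iUnion.mpr ⟨n, mem_closedBall.mpr (le_max_of_le_left ?_)⟩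
    have hc : c n ∈ t n := by simp only [c, dif_pos hne]; exact hne.some_mem
    exact Metric.dist_le_diam_of_mem
      (Metric.isBounded_iff_ediam_ne_top.mpr ((htε n).trans_lt ENNReal.ofReal_lt_top).ne) hyn hc
  · have hterm : ∀ n, ENNReal.ofReal (φ (max (Metric.diam (t n)) (δ n))) ≤
        (⨆ _ : (t n).Nonempty, ENNReal.ofReal (φ (ediam (t n)).toReal)) + w n := by
      intro n
      rw [hφmono.map_max, ENNReal.ofReal_max]
      refine max_le ?_ (le_add_left (ENNReal.ofReal_le_of_le_toReal (hφδ n).le))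
      rcases (t n).eq_empty_or_nonempty with h | h
      · simp [h, hφ0]
      · simp [h, Metric.diam]
    calc ∑' n, ENNReal.ofReal (φ (max (Metric.diam (t n)) (δ n)))
        ≤ ∑' n, ((⨆ _ : (t n).Nonempty, ENNReal.ofReal (φ (ediam (t n)).toReal)) + w n) :=
          ENNReal.tsum_le_tsum hterm
      _ = (∑' n, ⨆ _ : (t n).Nonempty, ENNReal.ofReal (φ (ediam (t n)).toReal)) +
            ∑' n, (w n : ℝ≥0∞) := ENNReal.tsum_add
      _ ≤ η / 2 + η / 2 := add_le_add hsum.le hwsum.le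
      _ = η := ENNReal.add_halves η

theorem exists_closedBall_covers_of_mkMetric_eq_zero {X : Type*} [MetricSpace X]
    [MeasurableSpace X] [BorelSpace X] [Nonempty X] {φ : ℝ → ℝ} (hφ0 : φ 0 = 0)
    (hφmono : Monotone φ) (hφcont : ContinuousAt φ 0) {E : Set X}
    (hE : Measure.mkMetric (fun t => ENNReal.ofReal (φ t.toReal)) E = 0) :
    ∃ (c : ℕ → ℕ → X) (ρ : ℕ → ℕ → ℝ), (∀ n i : ℕ, ρ n i ∈ Ioc 0 (1 / ((n : ℝ) + 1))) ∧
      (∀ n, E ⊆ ⋃ i, closedBall (c n i) (ρ n i)) ∧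
      ∑' p : ℕ × ℕ, (p.1 + 1 : ℝ≥0∞) * ENNReal.ofReal (φ (ρ p.1 p.2)) ≠ ⊤ := by
  obtain ⟨η, hη0, hη⟩ := ENNReal.exists_pos_sum_of_countable one_ne_zero ℕ
  have hcover (n : ℕ) := exists_closedBall_cover_of_mkMetric_eq_zero hφ0 hφmono hφcont hE
    (Nat.one_div_pos_of_nat (n := n)) (η := η n / (n + 1))
    (ENNReal.div_ne_zero.mpr ⟨ENNReal.coe_ne_zero.mpr (hη0 n).ne', by simp⟩)
  choose c ρ hρ hcov hsum using hcover
  refine ⟨c, ρ, hρ, hcov, ne_top_of_le_ne_top (hη.trans ENNReal.one_lt_top).ne ?_⟩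
  rw [ENNReal.tsum_prod']
  refine ENNReal.tsum_le_tsum fun n => ?_
  calc ∑' i, (n + 1 : ℝ≥0∞) * ENNReal.ofReal (φ (ρ n i))
      = (n + 1) * ∑' i, ENNReal.ofReal (φ (ρ n i)) := ENNReal.tsum_mul_left
    _ ≤ (n + 1) * (η n / (n + 1)) := by
        gcongr; exact hsum n
    _ = η n := ENNReal.mul_div_cancel (by simp) (by simp)

section BumpSum

variable {X ι : Type*} [MeasurableSpace X] (μ : Measure X) (B : ι → Set X)
  (a : ι → ℝ≥0∞)

noncomputable def bumpSum (x : X) : ℝ≥0∞ :=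
  ∑' i, (B i).indicator (fun _ => a i / μ (B i)) x

variable {μ B a}

theorem le_setLIntegral_bumpSum {i : ι} (hB : MeasurableSet (B i)) (h0 : μ (B i) ≠ 0)
    (htop : μ (B i) ≠ ⊤) : a i ≤ ∫⁻ x in B i, bumpSum μ B a x ∂μ :=
  calc a i = ∫⁻ _ in B i, a i / μ (B i) ∂μ := by
        rw [setLIntegral_const, ENNReal.div_mul_cancel h0 htop]
    _ ≤ ∫⁻ x in B i, bumpSum μ B a x ∂μ := setLIntegral_mono' hB fun x hx => by
        simpa [bumpSum, hx] using
          ENNReal.le_tsum (f := fun j => (B j).indicator (fun _ => a j / μ (B j)) x) i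

variable [Countable ι]

theorem measurable_bumpSum (hB : ∀ i, MeasurableSet (B i)) : Measurable (bumpSum μ B a) :=
  Measurable.tsum fun i => measurable_const.indicator (hB i)

theorem lintegral_bumpSum (hB : ∀ i, MeasurableSet (B i)) (h0 : ∀ i, μ (B i) ≠ 0)
    (htop : ∀ i, μ (B i) ≠ ⊤) : ∫⁻ x, bumpSum μ B a x ∂μ = ∑' i, a i := by
  simp only [bumpSum]
  rw [lintegral_tsum fun i => (measurable_const.indicator (hB i)).aemeasurable]
  congr 1 with i
  rw [lintegral_indicator (hB i), setLIntegral_const, ENNReal.div_mul_cancel (h0 i) (htop i)]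

theorem integrable_toReal_bumpSum (hB : ∀ i, MeasurableSet (B i)) (h0 : ∀ i, μ (B i) ≠ 0)
    (htop : ∀ i, μ (B i) ≠ ⊤) (ha : ∑' i, a i ≠ ⊤) :
    Integrable (fun x => (bumpSum μ B a x).toReal) μ :=
  integrable_toReal_of_lintegral_ne_top (measurable_bumpSum hB).aemeasurable
    (by rwa [lintegral_bumpSum hB h0 htop])

theorem toReal_le_setIntegral_toReal_bumpSum (hB : ∀ i, MeasurableSet (B i))
    (h0 : ∀ i, μ (B i) ≠ 0) (htop : ∀ i, μ (B i) ≠ ⊤) (ha : ∑' i, a i ≠ ⊤) (i : ι) :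
    (a i).toReal ≤ ∫ x in B i, (bumpSum μ B a x).toReal ∂μ := by
  have hfin : ∫⁻ x in B i, bumpSum μ B a x ∂μ ≠ ⊤ :=
    ne_top_of_le_ne_top (by rwa [lintegral_bumpSum hB h0 htop]) (setLIntegral_le_lintegral _ _)
  rw [integral_toReal (measurable_bumpSum hB).aemeasurable
    (ae_lt_top' (measurable_bumpSum hB).aemeasurable hfin)]
  exact ENNReal.toReal_mono hfin (le_setLIntegral_bumpSum (hB i) (h0 i) (htop i))

end BumpSum

theorem mul_setIntegral_le_integral_mul {X : Type*} [MeasurableSpace X] {μ : Measure X}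
    {K f : X → ℝ} {B : Set X} {c : ℝ} (hf : Integrable f μ) (hf0 : 0 ≤ f) (hK0 : 0 ≤ K)
    (hKf : Integrable (fun x => K x * f x) μ) (hB : MeasurableSet B) (hc : ∀ x ∈ B, c ≤ K x) :
    c * ∫ x in B, f x ∂μ ≤ ∫ x, K x * f x ∂μ :=
  calc c * ∫ x in B, f x ∂μ = ∫ x in B, c * f x ∂μ := (integral_const_mul c _).symm
    _ ≤ ∫ x in B, K x * f x ∂μ := setIntegral_mono_on (hf.integrableOn.const_mul c)
        hKf.integrableOn hB fun x hx => mul_le_mul_of_nonneg_right (hc x hx) (hf0 x)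
    _ ≤ ∫ x, K x * f x ∂μ :=
        setIntegral_le_integral hKf (.of_forall fun x => mul_nonneg (hK0 x) (hf0 x))

section Poisson

variable {d : ℕ}

instance : IsFiniteMeasure (sphereMeasure d) := by
  unfold sphereMeasure; infer_instance

instance : (sphereMeasure d).IsOpenPosMeasure :=
  Measure.isOpenPosMeasure_smul _ (ENNReal.inv_ne_zero.mpr (measure_ne_top _ _))

instance : Nonempty (sphere (0 : EuclideanSpace ℝ (Fin (d + 1))) 1) :=
  (NormedSpace.sphere_nonempty.mpr zero_le_one).to_subtype

noncomputable def poissonIntegral (d : ℕ)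
    (f : sphere (0 : EuclideanSpace ℝ (Fin (d + 1))) 1 → ℝ)
    (x : EuclideanSpace ℝ (Fin (d + 1))) : ℝ :=
  ∫ ξ, ballPoissonKernel d x ξ * f ξ ∂(sphereMeasure d)

theorem ballPoissonKernel_nonneg {x : EuclideanSpace ℝ (Fin (d + 1))} (hx : ‖x‖ ≤ 1)
    (ξ : EuclideanSpace ℝ (Fin (d + 1))) : 0 ≤ ballPoissonKernel d x ξ :=
  div_nonneg (by nlinarith [norm_nonneg x]) (by positivity)

theorem continuous_ballPoissonKernel {x : EuclideanSpace ℝ (Fin (d + 1))} (hx : ‖x‖ < 1) :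
    Continuous fun ξ : sphere (0 : EuclideanSpace ℝ (Fin (d + 1))) 1 =>
      ballPoissonKernel d x ξ := by
  refine continuous_const.div (by fun_prop) fun ξ => pow_ne_zero _ (norm_ne_zero_iff.mpr ?_)
  rintro h
  have : ‖(ξ : EuclideanSpace ℝ (Fin (d + 1)))‖ = 1 := by simp
  rw [sub_eq_zero.mp h, this] at hx
  exact hx.false

theorem integrable_ballPoissonKernel_mul {x : EuclideanSpace ℝ (Fin (d + 1))} (hx : ‖x‖ < 1)
    {f : sphere (0 : EuclideanSpace ℝ (Fin (d + 1))) 1 → ℝ}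
    (hf : Integrable f (sphereMeasure d)) :
    Integrable (fun ξ : sphere (0 : EuclideanSpace ℝ (Fin (d + 1))) 1 =>
      ballPoissonKernel d x ξ * f ξ) (sphereMeasure d) :=
  let K := BoundedContinuousFunction.mkOfCompact ⟨_, continuous_ballPoissonKernel hx⟩
  hf.bdd_mul K.continuous.aestronglyMeasurable (.of_forall K.norm_coe_le_norm)

theorem le_ballPoissonKernel_smul {y ξ : EuclideanSpace ℝ (Fin (d + 1))} (hy : ‖y‖ = 1)
    (hξ : ‖ξ‖ = 1) {s : ℝ} (hs : 0 < s) (hs1 : s ≤ 1) (hyξ : ‖y - ξ‖ ≤ 2 * s) :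
    1 / (3 ^ (d + 1) * s ^ d) ≤ ballPoissonKernel d ((1 - s) • y) ξ := by
  have hx : ‖(1 - s) • y‖ = 1 - s := by
    rw [norm_smul, hy, mul_one, Real.norm_of_nonneg (by linarith)]
  have hnum : s ≤ 1 - ‖(1 - s) • y‖ ^ 2 := by rw [hx]; nlinarith
  have hlow : s ≤ ‖(1 - s) • y - ξ‖ := by
    have := norm_sub_norm_le ξ ((1 - s) • y)
    rw [hξ, hx, norm_sub_rev] at this
    linarith
  have hup : ‖(1 - s) • y - ξ‖ ≤ 3 * s :=
    calc ‖(1 - s) • y - ξ‖ = ‖(y - ξ) - s • y‖ := by rw [sub_smul, one_smul]; abel_nf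
      _ ≤ ‖y - ξ‖ + ‖s • y‖ := norm_sub_le _ _
      _ ≤ 3 * s := by rw [norm_smul, hy, Real.norm_of_nonneg hs.le]; linarith
  calc 1 / (3 ^ (d + 1) * s ^ d) = s / (3 * s) ^ (d + 1) := by
        rw [mul_pow, pow_succ s]; field_simp
    _ ≤ ballPoissonKernel d ((1 - s) • y) ξ := div_le_div₀ (hs.le.trans hnum) hnum
        (pow_pos (hs.trans_le hlow) _) (pow_le_pow_left₀ (hs.le.trans hlow) hup _)

theorem le_poissonIntegral_smul {f : sphere (0 : EuclideanSpace ℝ (Fin (d + 1))) 1 → ℝ}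
    (hf : Integrable f (sphereMeasure d)) (hf0 : 0 ≤ f)
    {y c : sphere (0 : EuclideanSpace ℝ (Fin (d + 1))) 1} {s : ℝ} (hs : 0 < s) (hs1 : s ≤ 1)
    (hyc : dist y c ≤ s) :
    (∫ ξ in closedBall c s, f ξ ∂(sphereMeasure d)) / (3 ^ (d + 1) * s ^ d) ≤
      poissonIntegral d f ((1 - s) • (y : EuclideanSpace ℝ (Fin (d + 1)))) := by
  have hx : ‖(1 - s) • (y : EuclideanSpace ℝ (Fin (d + 1)))‖ ≤ 1 - s := by
    rw [norm_smul, norm_eq_of_mem_sphere y, mul_one, Real.norm_of_nonneg (by linarith)]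
  rw [div_eq_inv_mul, ← one_div]
  refine mul_setIntegral_le_integral_mul hf hf0
    (fun ξ => ballPoissonKernel_nonneg (by linarith) _) (integrable_ballPoissonKernel_mul
      (by linarith) hf) measurableSet_closedBall fun ξ hξ => ?_
  refine le_ballPoissonKernel_smul (norm_eq_of_mem_sphere y) (norm_eq_of_mem_sphere ξ) hs hs1 ?_
  rw [← dist_eq_norm, ← Subtype.dist_eq]
  linarith [dist_triangle_right y ξ c, mem_closedBall.mp hξ]

end Poisson

theorem frequently_lt_div_of_isBigO {F τ ψ : ℝ → ℝ} {s w : ℕ → ℝ}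
    (hτ : ∀ x ∈ Ioo (0 : ℝ) 1, 0 < τ x) (hO : τ =O[𝓝[>] 0] ψ)
    (hs : Tendsto s atTop (𝓝[>] 0)) (hw : Tendsto w atTop atTop)
    (hF : ∀ n, w n * |ψ (s n)| ≤ F (1 - s n)) (M : ℝ) :
    ∃ᶠ r in 𝓝[<] 1, M < F r / τ (1 - r) := by
  obtain ⟨C, hC0, hC⟩ := hO.exists_pos
  have hu : Tendsto (fun n => 1 - s n) atTop (𝓝[<] 1) := by
    refine tendsto_nhdsWithin_iff.mpr ⟨?_, (hs.eventually self_mem_nhdsWithin).mono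
      fun n hn => by simpa using hn⟩
    simpa using (tendsto_nhds_of_tendsto_nhdsWithin hs).const_sub 1
  refine hu.frequently (Eventually.frequently ?_)
  filter_upwards [hs.eventually hC.bound, hs.eventually (Ioo_mem_nhdsGT one_pos),
    hw.eventually_gt_atTop (M * C), hw.eventually_gt_atTop 0] with n hτψ hn01 hwM hw0
  have hτn := hτ _ hn01
  rw [Real.norm_of_nonneg hτn.le, Real.norm_eq_abs] at hτψ
  rw [sub_sub_cancel]
  calc M < w n / C := (lt_div_iff₀ hC0).mpr hwM
    _ ≤ w n * |ψ (s n)| / τ (s n) := by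
        rw [div_le_div_iff₀ hC0 hτn]; nlinarith
    _ ≤ F (1 - s n) / τ (s n) := div_le_div_of_nonneg_right (hF n) hτn.le

theorem exists_integrable_blowup_on_null_set_general (d : ℕ)
    (E : Set (sphere (0 : EuclideanSpace ℝ (Fin (d + 1))) 1))
    (φ : ℝ → ℝ) (hφ0 : φ 0 = 0)
    (hφmono : Monotone φ) (hφcont : Continuous φ)
    (τ : ℝ → ℝ) (hτpos : ∀ x ∈ Ioo (0 : ℝ) 1, 0 < τ x)
    (hE : Measure.mkMetric (fun t => ENNReal.ofReal (φ t.toReal)) E = 0)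
    (hO : τ =O[nhdsWithin 0 (Ioi 0)] fun s => s ^ (-(d : ℝ)) * φ s) :
    ∃ f : sphere (0 : EuclideanSpace ℝ (Fin (d + 1))) 1 → ℝ,
      Integrable f (sphereMeasure d) ∧ (∀ ξ, 0 ≤ f ξ) ∧
      ∀ y ∈ E, ∀ M : ℝ, ∃ᶠ r in nhdsWithin (1 : ℝ) (Iio 1),
        M < (∫ ξ, ballPoissonKernel d (r • (y : EuclideanSpace ℝ (Fin (d + 1)))) ξ * f ξ
              ∂(sphereMeasure d)) / τ (1 - r) := by
  obtain ⟨c, ρ, hρ, hcov, ha⟩ :=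
    exists_closedBall_covers_of_mkMetric_eq_zero hφ0 hφmono hφcont.continuousAt hE
  set σ := sphereMeasure d
  set B : ℕ × ℕ → Set (sphere (0 : EuclideanSpace ℝ (Fin (d + 1))) 1) :=
    fun p => closedBall (c p.1 p.2) (ρ p.1 p.2)
  have hB (p : ℕ × ℕ) : MeasurableSet (B p) := measurableSet_closedBall
  have hB0 (p : ℕ × ℕ) : σ (B p) ≠ 0 := (measure_closedBall_pos _ _ (hρ p.1 p.2).1).ne'
  have hBtop (p : ℕ × ℕ) : σ (B p) ≠ ⊤ := measure_ne_top _ _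
  set a : ℕ × ℕ → ℝ≥0∞ := fun p => (p.1 + 1) * ENNReal.ofReal (φ (ρ p.1 p.2))
  set f := fun ξ => (bumpSum σ B a ξ).toReal
  have hf : Integrable f σ := integrable_toReal_bumpSum hB hB0 hBtop ha
  refine ⟨f, hf, fun ξ => ENNReal.toReal_nonneg, fun y hy M => ?_⟩
  choose i hi using fun n => mem_iUnion.mp (hcov n hy)
  refine frequently_lt_div_of_isBigO (F := fun r => poissonIntegral d f (r • y)) hτpos hO
    (s := fun n => ρ n (i n)) (w := fun n => (n + 1) / 3 ^ (d + 1)) ?_ ?_ (fun n => ?_) M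
  · exact tendsto_nhdsWithin_iff.mpr ⟨squeeze_zero (fun n => (hρ n (i n)).1.le)
      (fun n => (hρ n (i n)).2) tendsto_one_div_add_atTop_nhds_zero_nat,
      .of_forall fun n => (hρ n (i n)).1⟩
  · exact (tendsto_natCast_atTop_atTop.atTop_add tendsto_const_nhds).atTop_div_const
      (by positivity)
  · obtain ⟨hs0, hs1⟩ := hρ n (i n)
    have hφs : 0 ≤ φ (ρ n (i n)) := hφ0 ▸ hφmono hs0.le
    have hmass := toReal_le_setIntegral_toReal_bumpSum hB hB0 hBtop ha (n, i n)
    rw [ENNReal.toReal_mul, ENNReal.toReal_ofReal hφs, ← Nat.cast_add_one,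
      ENNReal.toReal_natCast, Nat.cast_add_one] at hmass
    calc (n + 1) / 3 ^ (d + 1) * |ρ n (i n) ^ (-(d : ℝ)) * φ (ρ n (i n))|
        = (n + 1) * φ (ρ n (i n)) / (3 ^ (d + 1) * ρ n (i n) ^ d) := by
          rw [abs_of_nonneg (by positivity), Real.rpow_neg hs0.le, Real.rpow_natCast]
          field_simp
      _ ≤ poissonIntegral d f ((1 - ρ n (i n)) • y) :=
          (div_le_div_of_nonneg_right hmass (by positivity)).trans <|
            le_poissonIntegral_smul hf (fun ξ => ENNReal.toReal_nonneg) hs0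
              (hs1.trans (div_le_one_of_le₀ (by simp) (by positivity))) (hi n)

/-- If `H^φ(E) = 0` and `τ(s) = O(s^{-d} φ(s))` as `s → 0⁺`, then there is a nonnegative
`f ∈ L¹(S^d)` whose Poisson integral satisfies `limsup_{r→1} P[f](ry)/τ(1-r) = ∞` on `E`. -/
theorem exists_integrable_blowup_on_null_set (d : ℕ)
    (E : Set (sphere (0 : EuclideanSpace ℝ (Fin (d + 1))) 1))
    (φ : ℝ → ℝ) (hφ0 : φ 0 = 0) (hφnonneg : ∀ s : ℝ, 0 ≤ φ s)
    (hφmono : Monotone φ) (hφcont : Continuous φ)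
    (τ : ℝ → ℝ) (hτpos : ∀ x ∈ Ioo (0 : ℝ) 1, 0 < τ x)
    (hτanti : AntitoneOn τ (Ioo (0 : ℝ) 1))
    (hτtop : Tendsto τ (nhdsWithin 0 (Ioi 0)) atTop)
    (hE : Measure.mkMetric (fun t => ENNReal.ofReal (φ t.toReal)) E = 0)
    (hO : τ =O[nhdsWithin 0 (Ioi 0)] fun s => s ^ (-(d : ℝ)) * φ s) :
    ∃ f : sphere (0 : EuclideanSpace ℝ (Fin (d + 1))) 1 → ℝ,
      Integrable f (sphereMeasure d) ∧ (∀ ξ, 0 ≤ f ξ) ∧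
      ∀ y ∈ E, ∀ M : ℝ, ∃ᶠ r in nhdsWithin (1 : ℝ) (Iio 1),
        M < (∫ ξ, ballPoissonKernel d (r • (y : EuclideanSpace ℝ (Fin (d + 1)))) ξ * f ξ
              ∂(sphereMeasure d)) / τ (1 - r) :=
  exists_integrable_blowup_on_null_set_general d E φ hφ0 hφmono hφcont τ hτpos hE hO
end
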